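/- If the local stochastic matrices are not holonomic for the connected graph G, then there exist two spanning trees G' and G'' of G whose associated unique invariant probability vectors p' and p'' (satisfying p'ᵀA_{ij} = p'ᵀ for all edges of G' and similarly for G'') are distinct. -/

import Mathlib

open Matrix Finset

/-- The local stochastic matrix `A_{ij}`: identity except for the 2×2 principal
submatrix on rows/columns `i,j`, which is `[[1-a_{ij}, a_{ij}],[a_{ji}, 1-a_{ji}]]`. -/
def locMat {n : ℕ} (a : Fin n → Fin n → ℝ) (i j : Fin n) : Matrix (Fin n) (Fin n) ℝ :=
  Matrix.of fun k l =>
    if k = i then (if l = i then 1 - a i j else if l = j then a i j else 0)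
    else if k = j then (if l = i then a j i else if l = j then 1 - a j i else 0)
    else if k = l then 1 else 0

/-- `R_w`: the product of the ratios `r` along the (directed) edges of a walk `w`. -/
def Rwalk {n : ℕ} (r : Fin n → Fin n → ℝ) {G : SimpleGraph (Fin n)} {u v : Fin n}
    (w : G.Walk u v) : ℝ :=
  (w.darts.map fun d => r d.toProd.1 d.toProd.2).prod

/-- The local stochastic matrices (given by the weights `a`) are holonomic for `G`:
`R_C = 1` for every cycle `C` of length greater than 2. -/
def Holonomic {n : ℕ} (G : SimpleGraph (Fin n)) (a : Fin n → Fin n → ℝ) : Prop :=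
  ∀ (u : Fin n) (c : G.Walk u u), c.IsCycle → 2 < c.length →
    Rwalk (fun i j => a i j / a j i) c = 1

open SimpleGraph

section Aux

variable {n : ℕ}

@[simp] lemma Rwalk_nil {r : Fin n → Fin n → ℝ} {G : SimpleGraph (Fin n)} {u : Fin n} :
    Rwalk r (Walk.nil : G.Walk u u) = 1 := rfl

@[simp] lemma Rwalk_cons {r : Fin n → Fin n → ℝ} {G : SimpleGraph (Fin n)} {u v w : Fin n}
    (h : G.Adj u v) (p : G.Walk v w) :
    Rwalk r (Walk.cons h p) = r u v * Rwalk r p := by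
  simp [Rwalk]

lemma Rwalk_append {r : Fin n → Fin n → ℝ} {G : SimpleGraph (Fin n)} {u v w : Fin n}
    (p : G.Walk u v) (q : G.Walk v w) :
    Rwalk r (p.append q) = Rwalk r p * Rwalk r q := by
  simp [Rwalk, Walk.darts_append]

lemma Rwalk_concat {r : Fin n → Fin n → ℝ} {G : SimpleGraph (Fin n)} {u v w : Fin n}
    (p : G.Walk u v) (h : G.Adj v w) :
    Rwalk r (p.concat h) = Rwalk r p * r v w := by
  simp [Rwalk, Walk.darts_concat]

lemma Rwalk_transfer {r : Fin n → Fin n → ℝ} {G H : SimpleGraph (Fin n)} {u v : Fin n}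
    (p : G.Walk u v) (hp : ∀ e ∈ p.edges, e ∈ H.edgeSet) :
    Rwalk r (p.transfer H hp) = Rwalk r p := by
  induction p with
  | nil => rfl
  | cons h p ih =>
    show r _ _ * Rwalk r (p.transfer H _) = r _ _ * Rwalk r p
    rw [ih]

/-- A vertex with no incident edges reaches only itself. -/
lemma reachable_eq_of_isolated {K : SimpleGraph (Fin n)} {x y : Fin n}
    (hx : ∀ z, ¬ K.Adj x z) (h : K.Reachable x y) : x = y := by
  obtain ⟨w⟩ := h
  cases w with
  | nil => rfl
  | cons h' p => exact absurd h' (hx _)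

/-- Adding an edge between two non-connected vertices keeps a graph acyclic. -/
lemma acyclic_sup_edge {H : SimpleGraph (Fin n)} {u v : Fin n} (hH : H.IsAcyclic)
    (hne : u ≠ v) (hr : ¬ H.Reachable u v) : (H ⊔ SimpleGraph.edge u v).IsAcyclic := by
  intro x c hc
  by_cases he : s(u, v) ∈ c.edges
  · have hrr : ((H ⊔ SimpleGraph.edge u v) \ fromEdgeSet {s(u,v)}).Reachable u v :=
      (adj_and_reachable_delete_edges_iff_exists_cycle.mpr ⟨x, c, hc, he⟩).2
    apply hr
    refine hrr.mono ?_
    intro s t hst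
    rw [sdiff_adj] at hst
    rcases hst.1 with h1 | h1
    · exact h1
    · exfalso
      apply hst.2
      rw [edge_adj] at h1
      rw [fromEdgeSet_adj]
      refine ⟨?_, h1.2⟩
      rcases h1.1 with ⟨rfl, rfl⟩ | ⟨rfl, rfl⟩
      · rfl
      · exact Sym2.eq_swap
  · have hed : ∀ e ∈ c.edges, e ∈ H.edgeSet := by
      intro e hec
      have hee := c.edges_subset_edgeSet hec
      rw [edgeSet_sup] at hee
      rcases hee with h1 | h1
      · exact h1
      · exfalso
        rw [edge_edgeSet_of_ne hne] at h1
        simp only [Set.mem_singleton_iff] at h1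
        exact he (h1 ▸ hec)
    refine hH (c.transfer H hed) ?_
    rw [Walk.isCycle_def, Walk.isTrail_def] at hc ⊢
    refine ⟨?_, ?_, ?_⟩
    · rw [Walk.edges_transfer]; exact hc.1
    · intro hnil
      apply hc.2.1
      cases c with
      | nil => rfl
      | cons h p => exact absurd (congrArg Walk.length hnil) (by simp only [Walk.length_transfer, Walk.length_cons, Walk.length_nil]; omega)
    · rw [Walk.support_transfer]; exact hc.2.2

lemma exists_boundary_edge {G H : SimpleGraph (Fin n)} :
    ∀ {x y : Fin n} (_ : G.Walk x y) (_ : ¬ H.Reachable x y),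
      ∃ s t, G.Adj s t ∧ H.Reachable x s ∧ ¬ H.Reachable x t := by
  intro x y w
  induction w with
  | nil => intro hxy; exact absurd (Reachable.refl _) hxy
  | @cons x z y h p ih =>
    intro hxy
    by_cases hz : H.Reachable x z
    · have hzy : ¬ H.Reachable z y := fun h' => hxy (hz.trans h')
      obtain ⟨s, t, hst, hzs, hzt⟩ := ih hzy
      exact ⟨s, t, hst, hz.trans hzs, fun h' => hzt (hz.symm.trans h')⟩
    · exact ⟨x, z, h, Reachable.refl _, hz⟩

/-- Any acyclic subgraph of a connected graph extends to a spanning tree. -/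
lemma exists_tree_between {G : SimpleGraph (Fin n)} (hGc : G.Connected) :
    ∀ (k : ℕ) (H : SimpleGraph (Fin n)), H ≤ G → H.IsAcyclic →
      G.edgeSet.ncard - H.edgeSet.ncard ≤ k → ∃ T, H ≤ T ∧ T ≤ G ∧ T.IsTree := by
  intro k
  induction k with
  | zero =>
    intro H hHG hHa hcard
    have hsub : H.edgeSet ⊆ G.edgeSet := edgeSet_mono hHG
    have hle : G.edgeSet.ncard ≤ H.edgeSet.ncard := by omega
    have heq : H.edgeSet = G.edgeSet := Set.eq_of_subset_of_ncard_le hsub hle (Set.toFinite _)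
    have hHG' : H = G := edgeSet_inj.mp heq
    subst hHG'
    exact ⟨H, le_refl _, le_refl _, hGc, hHa⟩
  | succ k ih =>
    intro H hHG hHa hcard
    by_cases hc : H.Connected
    · exact ⟨H, le_refl _, hHG, SimpleGraph.IsTree.mk hc hHa⟩
    · haveI : Nonempty (Fin n) := hGc.nonempty
      have hpre : ¬ H.Preconnected := fun hp => hc (Connected.mk hp)
      simp only [Preconnected, not_forall] at hpre
      obtain ⟨x, y, hxy⟩ := hpre
      obtain ⟨s, t, hst, hxs, hxt⟩ := exists_boundary_edge ((hGc x y).some) hxy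
      have hstr : ¬ H.Reachable s t := fun h' => hxt (hxs.trans h')
      have hstne : s ≠ t := fun h' => hstr (h' ▸ Reachable.refl s)
      have hstadj : ¬ H.Adj s t := fun h' => hstr h'.reachable
      have hH'G : H ⊔ SimpleGraph.edge s t ≤ G := by
        refine sup_le hHG ?_
        intro p q hpq
        rw [edge_adj] at hpq
        rcases hpq.1 with ⟨rfl, rfl⟩ | ⟨rfl, rfl⟩
        exacts [hst, hst.symm]
      have hH'a : (H ⊔ SimpleGraph.edge s t).IsAcyclic := acyclic_sup_edge hHa hstne hstr
      have hes : (H ⊔ SimpleGraph.edge s t).edgeSet = insert s(s, t) H.edgeSet := by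
        rw [edgeSet_sup, edge_edgeSet_of_ne hstne, Set.union_comm, Set.singleton_union]
      have hnm : s(s, t) ∉ H.edgeSet := hstadj
      have hcard' : (H ⊔ SimpleGraph.edge s t).edgeSet.ncard = H.edgeSet.ncard + 1 := by
        rw [hes, Set.ncard_insert_of_notMem hnm (Set.toFinite _)]
      have hle' : (H ⊔ SimpleGraph.edge s t).edgeSet.ncard ≤ G.edgeSet.ncard :=
        Set.ncard_le_ncard (edgeSet_mono hH'G) (Set.toFinite _)
      obtain ⟨T, hT1, hT2, hT3⟩ := ih (H ⊔ SimpleGraph.edge s t) hH'G hH'a (by omega)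
      exact ⟨T, le_trans le_sup_left hT1, hT2, hT3⟩

/-- The graph on the edges of a path is acyclic. -/
lemma path_fromEdgeSet_acyclic {G : SimpleGraph (Fin n)} :
    ∀ {x y : Fin n} (q : G.Walk x y) (_ : q.IsPath),
      (fromEdgeSet {e | e ∈ q.edges}).IsAcyclic := by
  intro x y q
  induction q with
  | nil =>
    intro _
    simp only [Walk.edges_nil, List.not_mem_nil, Set.setOf_false, fromEdgeSet_empty]
    exact isAcyclic_bot
  | @cons x z y h p ih =>
    intro hp
    rw [Walk.cons_isPath_iff] at hp
    have hK := ih hp.1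
    have hset : {e : Sym2 (Fin n) | e ∈ (Walk.cons h p).edges}
        = {e : Sym2 (Fin n) | e ∈ p.edges} ∪ {s(x, z)} := by
      ext e
      simp only [Walk.edges_cons, List.mem_cons, Set.mem_setOf_eq, Set.mem_union,
        Set.mem_singleton_iff]
      tauto
    rw [hset, fromEdgeSet_union]
    have hiso : ∀ w, ¬ (fromEdgeSet {e : Sym2 (Fin n) | e ∈ p.edges}).Adj x w := by
      intro w hw
      rw [fromEdgeSet_adj] at hw
      exact hp.2 (Walk.fst_mem_support_of_mem_edges p hw.1)
    have hreach : ¬ (fromEdgeSet {e : Sym2 (Fin n) | e ∈ p.edges}).Reachable x z :=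
      fun hre => h.ne (reachable_eq_of_isolated hiso hre)
    exact acyclic_sup_edge hK h.ne hreach

/-- The invariance equation for `locMat` is equivalent to detailed balance. -/
lemma vecMul_locMat_iff (a : Fin n → Fin n → ℝ) {i j : Fin n} (hij : i ≠ j)
    (q : Fin n → ℝ) :
    Matrix.vecMul q (locMat a i j) = q ↔ q i * a i j = q j * a j i := by
  have hv : ∀ l, Matrix.vecMul q (locMat a i j) l = ∑ k, q k * locMat a i j k l := by
    intro l; simp [Matrix.vecMul, dotProduct]
  have hsumi : ∑ k, q k * locMat a i j k i = q i * (1 - a i j) + q j * a j i := by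
    have hterm : ∀ k, q k * locMat a i j k i
        = (if k = i then q i * (1 - a i j) else 0) + (if k = j then q j * (a j i) else 0) := by
      intro k
      have hij' : j ≠ i := Ne.symm hij
      by_cases h1 : k = i
      · subst h1; simp [locMat, hij, hij']
      · by_cases h2 : k = j
        · subst h2; simp [locMat, h1, hij, hij']
        · simp [locMat, h1, h2]
    rw [Finset.sum_congr rfl fun k _ => hterm k, Finset.sum_add_distrib,
      Finset.sum_ite_eq' Finset.univ i, Finset.sum_ite_eq' Finset.univ j]
    simp
  have hsumj : ∑ k, q k * locMat a i j k j = q i * a i j + q j * (1 - a j i) := by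
    have hterm : ∀ k, q k * locMat a i j k j
        = (if k = i then q i * a i j else 0) + (if k = j then q j * (1 - a j i) else 0) := by
      intro k
      have hij' : j ≠ i := Ne.symm hij
      by_cases h1 : k = i
      · subst h1; simp [locMat, hij, hij']
      · by_cases h2 : k = j
        · subst h2; simp [locMat, h1, hij, hij']
        · simp [locMat, h1, h2]
    rw [Finset.sum_congr rfl fun k _ => hterm k, Finset.sum_add_distrib,
      Finset.sum_ite_eq' Finset.univ i, Finset.sum_ite_eq' Finset.univ j]
    simp
  constructor
  · intro hq
    have hi := congrFun hq i
    rw [hv, hsumi] at hi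
    linarith
  · intro hbal
    funext l
    rw [hv]
    by_cases h1 : l = i
    · subst h1; rw [hsumi]; linarith
    · by_cases h2 : l = j
      · subst h2; rw [hsumj]; linarith
      · have h1' : i ≠ l := fun hh => h1 hh.symm
        have h2' : j ≠ l := fun hh => h2 hh.symm
        have hterm : ∀ k, q k * locMat a i j k l = if k = l then q l else 0 := by
          intro k
          by_cases hk1 : k = i
          · subst hk1; simp [locMat, h1, h2, h1', h2', hij]
          · by_cases hk2 : k = j
            · subst hk2; simp [locMat, h1, h2, h1', h2', hk1]
            · by_cases hk3 : k = l
              · subst hk3; simp [locMat, hk1, hk2]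
              · simp [locMat, hk1, hk2, hk3]
        rw [Finset.sum_congr rfl fun k _ => hterm k, Finset.sum_ite_eq' Finset.univ l]
        simp

/-- Positivity of `Rwalk` along subgraph walks. -/
lemma Rwalk_pos {G T : SimpleGraph (Fin n)} {a : Fin n → Fin n → ℝ}
    (ha : ∀ i j, G.Adj i j → a i j ∈ Set.Ioo (0:ℝ) 1) (hTG : T ≤ G)
    {x y : Fin n} (w : T.Walk x y) :
    0 < Rwalk (fun i j => a i j / a j i) w := by
  induction w with
  | nil => simp
  | cons h p ih =>
    rw [Rwalk_cons]
    exact mul_pos (div_pos (ha _ _ (hTG h)).1 (ha _ _ (hTG h.symm)).1) ih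

/-- Every spanning tree has a unique invariant probability vector; it is positive
and multiplicative along walks of the tree. -/
lemma tree_vec {G T : SimpleGraph (Fin n)} (a : Fin n → Fin n → ℝ)
    (ha : ∀ i j, G.Adj i j → a i j ∈ Set.Ioo (0:ℝ) 1) (hTG : T ≤ G) (hT : T.IsTree) :
    ∃ p : Fin n → ℝ, (∀ i, 0 < p i) ∧ (∑ i, p i = 1) ∧
      (∀ i j, T.Adj i j → Matrix.vecMul p (locMat a i j) = p) ∧
      (∀ q : Fin n → ℝ, ((∀ i, 0 ≤ q i) ∧ ∑ i, q i = 1 ∧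
          ∀ i j, T.Adj i j → Matrix.vecMul q (locMat a i j) = q) → q = p) ∧
      (∀ (x y : Fin n) (w : T.Walk x y),
        p y = p x * Rwalk (fun i j => a i j / a j i) w) := by
  classical
  obtain ⟨o⟩ := hT.isConnected.nonempty
  set r : Fin n → Fin n → ℝ := fun i j => a i j / a j i with hr
  let P : ∀ x y : Fin n, T.Walk x y := fun x y => (hT.existsUnique_path x y).choose
  have hP : ∀ x y, (P x y).IsPath := fun x y => (hT.existsUnique_path x y).choose_spec.1
  have hPu : ∀ {x y : Fin n} (w : T.Walk x y), w.IsPath → w = P x y :=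
    fun w hw => (hT.existsUnique_path _ _).choose_spec.2 w hw
  set f : Fin n → ℝ := fun x => Rwalk r (P o x) with hf
  have hfpos : ∀ x, 0 < f x := fun x => Rwalk_pos ha hTG _
  have hrmul : ∀ {i j : Fin n}, T.Adj i j → r j i * r i j = 1 := by
    intro i j hadj
    have h1 : a i j ≠ 0 := ne_of_gt (ha _ _ (hTG hadj)).1
    have h2 : a j i ≠ 0 := ne_of_gt (ha _ _ (hTG hadj.symm)).1
    show a j i / a i j * (a i j / a j i) = 1
    field_simp
  have hstep : ∀ {x y : Fin n}, T.Adj x y → f y = f x * r x y := by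
    intro x y hxy
    by_cases hy : y ∈ (P o x).support
    · have hd : (P o x).dropUntil y hy = Walk.cons hxy.symm Walk.nil :=
        (hPu _ ((hP o x).dropUntil hy)).trans
          (hPu (Walk.cons hxy.symm Walk.nil) (Path.singleton hxy.symm).2).symm
      have hspec := (P o x).take_spec hy
      have ht : (P o x).takeUntil y hy = P o y := hPu _ ((hP o x).takeUntil hy)
      have hfx : f x = f y * (r y x * 1) := by
        show Rwalk r (P o x) = Rwalk r (P o y) * (r y x * 1)
        conv_lhs => rw [← hspec]
        rw [Rwalk_append, ht, hd, Rwalk_cons, Rwalk_nil]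
      rw [hfx, mul_one, mul_assoc, hrmul hxy, mul_one]
    · have hW : ((P o x).concat hxy).IsPath := by
        rw [← Walk.isPath_reverse_iff, Walk.reverse_concat, Walk.cons_isPath_iff]
        exact ⟨(Walk.isPath_reverse_iff _).mpr (hP o x), by
          rw [Walk.support_reverse]; simpa using hy⟩
      have heq := hPu _ hW
      show Rwalk r (P o y) = Rwalk r (P o x) * r x y
      rw [← heq, Rwalk_concat]
  have hwalk : ∀ (x y : Fin n) (w : T.Walk x y), f y = f x * Rwalk r w := by
    intro x y w
    induction w with
    | nil => simp
    | cons h p ih => rw [ih, hstep h, Rwalk_cons]; ring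
  set S : ℝ := ∑ x, f x with hS
  have hSpos : 0 < S := Finset.sum_pos (fun i _ => hfpos i) ⟨o, Finset.mem_univ o⟩
  refine ⟨fun x => f x / S, fun x => div_pos (hfpos x) hSpos, ?_, ?_, ?_, ?_⟩
  · show (∑ i, f i / S) = 1
    rw [← Finset.sum_div, div_self (ne_of_gt hSpos)]
  · intro i j hij
    rw [vecMul_locMat_iff a hij.ne]
    show f i / S * a i j = f j / S * a j i
    have h2 : a j i ≠ 0 := ne_of_gt (ha _ _ (hTG hij.symm)).1
    have h3 : f j = f i * (a i j / a j i) := hstep hij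
    rw [h3]
    field_simp
  · rintro q ⟨-, hq1, hq2⟩
    have hqstep : ∀ {i j : Fin n}, T.Adj i j → q j = q i * r i j := by
      intro i j hij
      have hbal := (vecMul_locMat_iff a hij.ne q).mp (hq2 i j hij)
      have h2 : a j i ≠ 0 := ne_of_gt (ha _ _ (hTG hij.symm)).1
      show q j = q i * (a i j / a j i)
      field_simp
      linarith
    have hqwalk : ∀ (x y : Fin n) (w : T.Walk x y), q y = q x * Rwalk r w := by
      intro x y w
      induction w with
      | nil => simp
      | cons h p ih => rw [ih, hqstep h, Rwalk_cons]; ring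
    have hqx : ∀ x, q x = q o * f x := fun x => hqwalk o x (P o x)
    have hsum : ∑ x, q x = q o * S := by
      rw [hS, Finset.mul_sum]
      exact Finset.sum_congr rfl fun x _ => hqx x
    have hqoS : q o * S = 1 := by rw [← hsum]; exact hq1
    have hqo : q o = 1 / S := by
      rw [eq_div_iff (ne_of_gt hSpos)]; exact hqoS
    funext x
    show q x = f x / S
    rw [hqx x, hqo]
    ring
  · intro x y w
    show f y / S = f x / S * Rwalk r w
    rw [hwalk x y w]
    ring

end Aux

/-- If the local stochastic matrices are not holonomic for the connected graph `G`,
then there exist two spanning trees of `G` whose associated unique invariant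
probability vectors are distinct. -/
theorem stmt6 {n : ℕ} (G : SimpleGraph (Fin n)) (hGc : G.Connected)
    (a : Fin n → Fin n → ℝ) (ha : ∀ i j, G.Adj i j → a i j ∈ Set.Ioo (0:ℝ) 1)
    (hnh : ¬ Holonomic G a) :
    ∃ H H' : SimpleGraph (Fin n), H ≤ G ∧ H.IsTree ∧ H' ≤ G ∧ H'.IsTree ∧
      ∃ p p' : Fin n → ℝ,
        ((∀ i, 0 ≤ p i) ∧ ∑ i, p i = 1 ∧
          ∀ i j, H.Adj i j → Matrix.vecMul p (locMat a i j) = p) ∧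
        (∀ q : Fin n → ℝ,
          ((∀ i, 0 ≤ q i) ∧ ∑ i, q i = 1 ∧
            ∀ i j, H.Adj i j → Matrix.vecMul q (locMat a i j) = q) → q = p) ∧
        ((∀ i, 0 ≤ p' i) ∧ ∑ i, p' i = 1 ∧
          ∀ i j, H'.Adj i j → Matrix.vecMul p' (locMat a i j) = p') ∧
        (∀ q : Fin n → ℝ,
          ((∀ i, 0 ≤ q i) ∧ ∑ i, q i = 1 ∧
            ∀ i j, H'.Adj i j → Matrix.vecMul q (locMat a i j) = q) → q = p') ∧
        p ≠ p' := by
  classical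
  unfold Holonomic at hnh
  push_neg at hnh
  obtain ⟨u, c, hc, hlen, hR⟩ := hnh
  cases c with
  | nil => rw [Walk.isCycle_def] at hc; exact absurd rfl hc.2.1
  | @cons u v _ h q =>
    obtain ⟨hq, hevq⟩ := (Walk.cons_isCycle_iff q h).mp hc
    -- spanning tree containing the path q
    have hKG : fromEdgeSet {e | e ∈ q.edges} ≤ G := by
      intro x y hxy
      rw [fromEdgeSet_adj] at hxy
      exact q.edges_subset_edgeSet hxy.1
    have hKa := path_fromEdgeSet_acyclic q hq
    obtain ⟨T₁, hKT₁, hT₁G, hT₁⟩ :=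
      exists_tree_between hGc G.edgeSet.ncard _ hKG hKa (Nat.sub_le _ _)
    -- spanning tree containing the edge u v
    have hEG : SimpleGraph.edge u v ≤ G := by
      intro x y hxy
      rw [edge_adj] at hxy
      rcases hxy.1 with ⟨rfl, rfl⟩ | ⟨rfl, rfl⟩
      exacts [h, h.symm]
    have hEa : (SimpleGraph.edge u v).IsAcyclic := by
      have := acyclic_sup_edge (isAcyclic_bot (V := Fin n)) h.ne
        (fun hre => h.ne (((reachable_bot).mp hre)))
      rwa [bot_sup_eq] at this
    obtain ⟨T₂, hET₂, hT₂G, hT₂⟩ :=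
      exists_tree_between hGc G.edgeSet.ncard _ hEG hEa (Nat.sub_le _ _)
    obtain ⟨p₁, hp₁pos, hp₁sum, hp₁bal, hp₁uniq, hp₁walk⟩ := tree_vec a ha hT₁G hT₁
    obtain ⟨p₂, hp₂pos, hp₂sum, hp₂bal, hp₂uniq, hp₂walk⟩ := tree_vec a ha hT₂G hT₂
    refine ⟨T₁, T₂, hT₁G, hT₁, hT₂G, hT₂, p₁, p₂,
      ⟨fun i => (hp₁pos i).le, hp₁sum, hp₁bal⟩, hp₁uniq,
      ⟨fun i => (hp₂pos i).le, hp₂sum, hp₂bal⟩, hp₂uniq, ?_⟩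
    intro hpp
    apply hR
    -- transfer q into T₁
    have hqT : ∀ e ∈ q.edges, e ∈ T₁.edgeSet := by
      intro e he
      apply edgeSet_mono hKT₁
      rw [edgeSet_fromEdgeSet]
      exact ⟨he, fun hd => (G.not_isDiag_of_mem_edgeSet (q.edges_subset_edgeSet he)) hd⟩
    have h1 : p₁ u = p₁ v * Rwalk (fun i j => a i j / a j i) q := by
      have := hp₁walk v u (q.transfer T₁ hqT)
      rwa [Rwalk_transfer] at this
    have hT₂adj : T₂.Adj u v := hET₂ ((edge_adj u v u v).mpr ⟨Or.inl ⟨rfl, rfl⟩, h.ne⟩)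
    have h2 : p₂ v = p₂ u * ((a u v / a v u) * 1) := by
      have := hp₂walk u v (Walk.cons hT₂adj Walk.nil)
      rwa [Rwalk_cons, Rwalk_nil] at this
    rw [← hpp] at h2
    have key : p₁ u * 1 = p₁ u * ((a u v / a v u) * Rwalk (fun i j => a i j / a j i) q) := by
      rw [mul_one]
      conv_lhs => rw [h1, h2]
      ring
    have := mul_left_cancel₀ (ne_of_gt (hp₁pos u)) key
    rw [Rwalk_cons]
    exact this.symm
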